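/- Suppose v_m^k solves the Hamilton–Jacobi scheme (2.3) and u_m^k := D_x v_{m+1}^k satisfies the CFL condition |H_p(x_m,t_k,c+u_m^k)| < λ⁻¹ for all m and all 0 ≤ k ≤ k*. Then for each n and each 0 < l+1 ≤ k*+1, v_n^{l+1} = inf_ξ E_n^{l+1}(ξ), where the infimum is over velocity fields ξ : G → [−λ⁻¹,λ⁻¹] for the walks from (x_n,t_{l+1}); the minimizing velocity field ξ* exists, is unique, and is given by ξ*_m^{k+1} = H_p(x_m, t_k, c + D_x v_{m+1}^k). -/

import Mathlib

open scoped BigOperators Classical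

noncomputable section

def dx (N : ℕ) : ℝ := 1 / (2 * N)

/-- Time mesh `Δt = 1/(2K)`. -/
def dt (K : ℕ) : ℝ := 1 / (2 * K)

/-- Hyperbolic ratio `λ = Δt/Δx`. -/
def lam (N K : ℕ) : ℝ := dt K / dx N

/-- Position (in units of `Δx`, i.e. the integer index `m`) at time step `k` of the backward
random walk starting at `x_n` at time `t_{l+1}`, whose step from time `j+1` down to time `j`
is `+Δx` if `s j = true` and `-Δx` otherwise. -/
def pos (n : ℤ) (l : ℕ) (s : Fin (l + 1) → Bool) (k : ℕ) : ℤ :=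
  n + ∑ j : Fin (l + 1), if k ≤ (j : ℕ) then (if s j then 1 else -1) else 0

/-- The probability density `μ(γ;ξ)` of the path encoded by `s`: the product over all backward
steps of the transition probability `1/2 - (λ/2)ξ` (step `+Δx`) or `1/2 + (λ/2)ξ` (step `-Δx`),
where `ξ` is evaluated at the grid point `(γ^{j+1}, t_{j+1})` from which the step is taken. -/
def walkMeasure (N K : ℕ) (n : ℤ) (l : ℕ) (ξ : ℤ → ℕ → ℝ) (s : Fin (l + 1) → Bool) : ℝ :=
  ∏ j : Fin (l + 1),
    (if s j then 1 / 2 - lam N K / 2 * ξ (pos n l s ((j : ℕ) + 1)) ((j : ℕ) + 1)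
     else 1 / 2 + lam N K / 2 * ξ (pos n l s ((j : ℕ) + 1)) ((j : ℕ) + 1))

/-- `p_m^k`: the total mass of paths sitting at `x_m` at time `t_k`. -/
def pmass (N K : ℕ) (n : ℤ) (l : ℕ) (ξ : ℤ → ℕ → ℝ) (m : ℤ) (k : ℕ) : ℝ :=
  ∑ s : Fin (l + 1) → Bool, if pos n l s k = m then walkMeasure N K n l ξ s else 0

/-- The discretized initial datum (2.2): `u_Δ^0(x)` is the cell average of `u^0` over
`[x_m - Δx, x_m + Δx)`, where `m = m(x)` is the even integer with `x ∈ [x_m - Δx, x_m + Δx)`. -/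
def uD0 (N : ℕ) (u0 : ℝ → ℝ) (x : ℝ) : ℝ :=
  (1 / (2 * dx N)) *
    ∫ y in (((2 * ⌊(x / dx N + 1) / 2⌋ : ℤ) : ℝ) * dx N - dx N)..(((2 * ⌊(x / dx N + 1) / 2⌋ : ℤ) : ℝ) * dx N + dx N),
      u0 y

/-- The discretized initial datum (2.4): `v_Δ^0(x) = v^0(0) + ∫_0^x u_Δ^0(y) dy`. -/
def vD0 (N : ℕ) (u0 v0 : ℝ → ℝ) (x : ℝ) : ℝ :=
  v0 0 + ∫ y in (0:ℝ)..x, uD0 N u0 y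

/-- `u` solves the Lax–Friedrichs scheme (2.1) on the even grid, with initial datum
`u_m^0 = uinit(x_m)` and `2N`-periodicity. -/
def SolvesLF (N K : ℕ) (H : ℝ → ℝ → ℝ → ℝ) (c : ℝ) (uinit : ℝ → ℝ) (u : ℤ → ℕ → ℝ) : Prop :=
  (∀ m : ℤ, Even m → u m 0 = uinit ((m : ℝ) * dx N)) ∧
  (∀ (m : ℤ) (k : ℕ), u (m + 2 * N) k = u m k) ∧
  (∀ (m : ℤ) (k : ℕ), Even (m + (k : ℤ)) →
    (u (m + 1) (k + 1) - (u m k + u (m + 2) k) / 2) / dt K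
      + (H (((m : ℝ) + 2) * dx N) ((k : ℝ) * dt K) (c + u (m + 2) k)
          - H ((m : ℝ) * dx N) ((k : ℝ) * dt K) (c + u m k)) / (2 * dx N) = 0)

/-- `v` solves the Hamilton–Jacobi scheme (2.3) on the odd grid, with initial datum
`v_{m+1}^0 = vinit(x_{m+1})` and `2N`-periodicity. -/
def SolvesHJ (N K : ℕ) (H : ℝ → ℝ → ℝ → ℝ) (c hc : ℝ) (vinit : ℝ → ℝ) (v : ℤ → ℕ → ℝ) : Prop :=
  (∀ m : ℤ, Odd m → v m 0 = vinit ((m : ℝ) * dx N)) ∧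
  (∀ (m : ℤ) (k : ℕ), v (m + 2 * N) k = v m k) ∧
  (∀ (m : ℤ) (k : ℕ), Even (m + (k : ℤ)) →
    (v m (k + 1) - (v (m - 1) k + v (m + 1) k) / 2) / dt K
      + H ((m : ℝ) * dx N) ((k : ℝ) * dt K) (c + (v (m + 1) k - v (m - 1) k) / (2 * dx N)) = hc)


/-- The Legendre transform `L(x,t,ξ) = sup_p {ξp - H(x,t,p)}`. -/
def Leg (H : ℝ → ℝ → ℝ → ℝ) (x t ξ : ℝ) : ℝ := ⨆ p : ℝ, (ξ * p - H x t p)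

/-- `L^c(x,t,ξ) = L(x,t,ξ) - cξ`. -/
def LegC (H : ℝ → ℝ → ℝ → ℝ) (c x t ξ : ℝ) : ℝ := Leg H x t ξ - c * ξ

/-- A velocity field is admissible when its values lie in `[-λ⁻¹, λ⁻¹]`. -/
def Adm (N K : ℕ) (ξ : ℤ → ℕ → ℝ) : Prop := ∀ m k, |ξ m k| ≤ (lam N K)⁻¹

/-- `(x_m, t_k)` belongs to the grid `G` of points reachable by walks from `(x_n, t_{l+1})`:
`1 ≤ k ≤ l+1`, odd parity, and `|x_m - x_n| ≤ (l+1-k)Δx`. -/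
def inG (n : ℤ) (l : ℕ) (m : ℤ) (k : ℕ) : Prop :=
  1 ≤ k ∧ k ≤ l + 1 ∧ Odd (m + (k : ℤ)) ∧ |m - n| ≤ (l : ℤ) + 1 - (k : ℤ)

/-- The discrete stochastic action
`E_n^{l+1}(ξ) = E_{μ(·;ξ)}[Σ_{0<k≤l+1} L^c(γ^k, t_{k-1}, ξ^k_{m(γ^k)}) Δt + v_Δ^0(γ^0)] + h(c) t_{l+1}`. -/
def gridAction (N K : ℕ) (H : ℝ → ℝ → ℝ → ℝ) (c hc : ℝ) (vinit : ℝ → ℝ)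
    (n : ℤ) (l : ℕ) (ξ : ℤ → ℕ → ℝ) : ℝ :=
  (∑ s : Fin (l + 1) → Bool, walkMeasure N K n l ξ s *
      ((∑ k ∈ Finset.Icc 1 (l + 1),
          LegC H c ((pos n l s k : ℝ) * dx N) (((k : ℝ) - 1) * dt K) (ξ (pos n l s k) k) * dt K)
        + vinit ((pos n l s 0 : ℝ) * dx N)))
    + hc * (((l : ℝ) + 1) * dt K)

/-!
Dynamic programming along the first backward step of the walk. Conditioning on that step gives
`E_n^{k+1}(ξ) = L^c Δt + h(c) Δt + p₊ E_{n+1}^k(ξ) + p₋ E_{n-1}^k(ξ)` with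
`p_± = 1/2 ∓ (λ/2) ξ_n^{k+1}`, and subtracting the scheme (2.3) turns this into
```
E_n^{k+1}(ξ) - v_n^{k+1}
  = Δt G(ξ_n^{k+1}) + p₊ (E_{n+1}^k(ξ) - v_{n+1}^k) + p₋ (E_{n-1}^k(ξ) - v_{n-1}^k),
```
where `G(ξ) = L(ξ) - ξ q + H(q)` is the Fenchel–Young gap at `q = c + D_x v_{n+1}^k`. Since `G ≥ 0`
and `p_± ≥ 0`, induction on `k` gives `E ≥ v`. The gap vanishes exactly at `ξ = H_p(q)`, so `ξ*`
attains `v`; and the CFL condition makes both `p_±` of `ξ*` positive, so equality `E(ξ) = v`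
propagates to both children and forces `ξ = ξ*` on all of `G`.
-/

open Filter Set

section FenchelYoung

variable {f : ℝ → ℝ} {ξ : ℝ}

def fenchelGap (f : ℝ → ℝ) (ξ q : ℝ) : ℝ := (⨆ p, ξ * p - f p) - ξ * q + f q

theorem bddAbove_range_mul_sub_of_superlinear (hf : Continuous f)
    (hsl : Tendsto (fun p => f p / |p|) (comap abs atTop) atTop) (ξ : ℝ) :
    BddAbove (range fun p => ξ * p - f p) := by
  have hfar : ∀ᶠ p in cocompact ℝ, ξ * p - f p ≤ ξ * 0 - f 0 := by
    rw [cocompact_eq_atBot_atTop, ← comap_abs_atTop]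
    filter_upwards [hsl.eventually_ge_atTop (|ξ| + |f 0|), tendsto_comap.eventually_ge_atTop 1]
      with p hp hp1
    rw [le_div_iff₀ (by linarith)] at hp
    calc ξ * p - f p ≤ |ξ| * |p| - (|ξ| + |f 0|) * |p| := by
          rw [← abs_mul]; linarith [le_abs_self (ξ * p)]
      _ = -(|f 0| * |p|) := by ring
      _ ≤ ξ * 0 - f 0 := by
          linarith [mul_le_mul_of_nonneg_left hp1 (abs_nonneg (f 0)), le_abs_self (f 0)]
  obtain ⟨p₀, hp₀⟩ := ((continuous_const.mul continuous_id).sub hf).exists_forall_ge' 0 hfar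
  exact ⟨_, forall_mem_range.2 hp₀⟩

theorem deriv_mul_sub_le (hf : Differentiable ℝ f) (hmono : Monotone (deriv f)) (p q : ℝ) :
    deriv f q * p - f p ≤ deriv f q * q - f q := by
  have hconv := hmono.convexOn_univ_of_deriv hf
  rcases lt_trichotomy p q with hpq | rfl | hqp
  · have := hconv.slope_le_deriv (mem_univ p) (mem_univ q) hpq (hf q)
    rw [slope_def_field, div_le_iff₀ (sub_pos.2 hpq)] at this
    linarith
  · rfl
  · have := hconv.deriv_le_slope (mem_univ q) (mem_univ p) hqp (hf q)
    rw [slope_def_field, le_div_iff₀ (sub_pos.2 hqp)] at this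
    linarith

theorem fenchelGap_nonneg (hbdd : BddAbove (range fun p => ξ * p - f p)) (q : ℝ) :
    0 ≤ fenchelGap f ξ q := by
  have := le_ciSup hbdd q
  simp only [fenchelGap]
  linarith

theorem fenchelGap_deriv (hf : Differentiable ℝ f) (hmono : Monotone (deriv f)) (q : ℝ) :
    fenchelGap f (deriv f q) q = 0 := by
  have hbdd : BddAbove (range fun p => deriv f q * p - f p) :=
    ⟨_, forall_mem_range.2 fun p => deriv_mul_sub_le hf hmono p q⟩
  have := le_antisymm (ciSup_le fun p => deriv_mul_sub_le hf hmono p q) (le_ciSup hbdd q)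
  simp only [fenchelGap, this]
  ring

theorem eq_deriv_of_fenchelGap_eq_zero {q : ℝ} (hf : DifferentiableAt ℝ f q)
    (hbdd : BddAbove (range fun p => ξ * p - f p)) (h : fenchelGap f ξ q = 0) :
    ξ = deriv f q := by
  have hmax : IsLocalMax (fun p => ξ * p - f p) q :=
    Eventually.of_forall fun p => by
      have := le_ciSup hbdd p
      simp only [fenchelGap] at h
      linarith
  have hderiv : HasDerivAt (fun p => ξ * p - f p) (ξ - deriv f q) q := by
    simpa using ((hasDerivAt_id' q).const_mul ξ).fun_sub hf.hasDerivAt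
  exact sub_eq_zero.1 (hmax.hasDerivAt_eq_zero hderiv)

end FenchelYoung

section RandomWalk

variable {N K : ℕ} {n : ℤ} {l : ℕ}

theorem Fintype.sum_fin_succ_pi_eq_sum_snoc {α M : Type*} [Fintype α] [AddCommMonoid M]
    (F : (Fin (l + 1) → α) → M) :
    ∑ s, F s = ∑ a, ∑ s' : Fin l → α, F (Fin.snoc s' a) := by
  rw [← (Fin.snocEquiv fun _ => α).sum_comp, Fintype.sum_prod_type]
  rfl

theorem pos_last (s : Fin (l + 1) → Bool) : pos n l s (l + 1) = n := by
  simp only [pos, add_eq_left]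
  exact Finset.sum_eq_zero fun j _ => if_neg (by omega)

theorem pos_snoc (s' : Fin (l + 1) → Bool) (b : Bool) {k : ℕ} (hk : k ≤ l + 1) :
    pos n (l + 1) (Fin.snoc s' b) k = pos (n + if b then 1 else -1) l s' k := by
  simp only [pos, Fin.sum_univ_castSucc, Fin.snoc_castSucc, Fin.snoc_last, Fin.val_castSucc,
    Fin.val_last, if_pos hk]
  ring

theorem walkMeasure_snoc (ξ : ℤ → ℕ → ℝ) (s' : Fin (l + 1) → Bool) (b : Bool) :
    walkMeasure N K n (l + 1) ξ (Fin.snoc s' b) =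
      (if b then 1 / 2 - lam N K / 2 * ξ n (l + 2) else 1 / 2 + lam N K / 2 * ξ n (l + 2)) *
        walkMeasure N K (n + if b then 1 else -1) l ξ s' := by
  rw [walkMeasure, Fin.prod_univ_castSucc, mul_comm]
  simp only [Fin.snoc_castSucc, Fin.snoc_last, Fin.val_castSucc, Fin.val_last, pos_last]
  congr 1
  exact Finset.prod_congr rfl fun j _ => by rw [pos_snoc s' b (by omega)]

theorem walkMeasure_zero (ξ : ℤ → ℕ → ℝ) (b : Bool) :
    walkMeasure N K n 0 ξ (fun _ => b) =
      if b then 1 / 2 - lam N K / 2 * ξ n 1 else 1 / 2 + lam N K / 2 * ξ n 1 := by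
  simp [walkMeasure, pos_last]

theorem sum_walkMeasure (ξ : ℤ → ℕ → ℝ) (l : ℕ) (n : ℤ) :
    ∑ s, walkMeasure N K n l ξ s = 1 := by
  induction l generalizing n with
  | zero =>
    simp only [Fintype.sum_fin_succ_pi_eq_sum_snoc, Fin.snoc_zero, Fintype.sum_unique,
      Fintype.sum_bool, walkMeasure_zero, if_true, Bool.false_eq_true, if_false]
    ring
  | succ l ih =>
    simp only [Fintype.sum_fin_succ_pi_eq_sum_snoc (l := l + 1), walkMeasure_snoc,
      ← Finset.mul_sum, ih, Fintype.sum_bool, if_true, Bool.false_eq_true, if_false]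
    ring

end RandomWalk

section Action

variable {N K : ℕ} {H : ℝ → ℝ → ℝ → ℝ} {c hc : ℝ} {vinit : ℝ → ℝ}

def pathCost (N K : ℕ) (H : ℝ → ℝ → ℝ → ℝ) (c : ℝ) (vinit : ℝ → ℝ) (n : ℤ) (l : ℕ)
    (ξ : ℤ → ℕ → ℝ) (s : Fin (l + 1) → Bool) : ℝ :=
  (∑ k ∈ Finset.Icc 1 (l + 1),
      LegC H c ((pos n l s k : ℝ) * dx N) (((k : ℝ) - 1) * dt K) (ξ (pos n l s k) k) * dt K)
    + vinit ((pos n l s 0 : ℝ) * dx N)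

theorem gridAction_eq_sum_pathCost (n : ℤ) (l : ℕ) (ξ : ℤ → ℕ → ℝ) :
    gridAction N K H c hc vinit n l ξ =
      ∑ s, walkMeasure N K n l ξ s * pathCost N K H c vinit n l ξ s
        + hc * (((l : ℝ) + 1) * dt K) :=
  rfl

theorem pathCost_snoc (n : ℤ) (l : ℕ) (ξ : ℤ → ℕ → ℝ) (s' : Fin (l + 1) → Bool) (b : Bool) :
    pathCost N K H c vinit n (l + 1) ξ (Fin.snoc s' b) =
      LegC H c ((n : ℝ) * dx N) (((l : ℝ) + 1) * dt K) (ξ n (l + 2)) * dt K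
        + pathCost N K H c vinit (n + if b then 1 else -1) l ξ s' := by
  rw [pathCost, pathCost, Finset.sum_Icc_succ_top (by omega), pos_last, pos_snoc s' b (by omega),
    Finset.sum_congr rfl fun k hk => by rw [pos_snoc s' b (Finset.mem_Icc.1 hk).2],
    show ((l + 1 + 1 : ℕ) : ℝ) - 1 = l + 1 by push_cast; ring]
  ring

theorem pathCost_zero (n : ℤ) (ξ : ℤ → ℕ → ℝ) (b : Bool) :
    pathCost N K H c vinit n 0 ξ (fun _ => b) =
      LegC H c ((n : ℝ) * dx N) 0 (ξ n 1) * dt K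
        + vinit (((n + if b then 1 else -1 : ℤ) : ℝ) * dx N) := by
  simp [pathCost, pos]

theorem gridAction_zero (n : ℤ) (ξ : ℤ → ℕ → ℝ) :
    gridAction N K H c hc vinit n 0 ξ =
      LegC H c ((n : ℝ) * dx N) 0 (ξ n 1) * dt K + hc * dt K
        + (1 / 2 - lam N K / 2 * ξ n 1) * vinit (((n + 1 : ℤ) : ℝ) * dx N)
        + (1 / 2 + lam N K / 2 * ξ n 1) * vinit (((n - 1 : ℤ) : ℝ) * dx N) := by
  simp only [gridAction_eq_sum_pathCost, Fintype.sum_fin_succ_pi_eq_sum_snoc, Fin.snoc_zero,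
    Fintype.sum_unique, Fintype.sum_bool, walkMeasure_zero, pathCost_zero, if_true,
    Bool.false_eq_true, if_false, ← sub_eq_add_neg]
  push_cast
  ring

theorem gridAction_succ (n : ℤ) (l : ℕ) (ξ : ℤ → ℕ → ℝ) :
    gridAction N K H c hc vinit n (l + 1) ξ =
      LegC H c ((n : ℝ) * dx N) (((l : ℝ) + 1) * dt K) (ξ n (l + 2)) * dt K + hc * dt K
        + (1 / 2 - lam N K / 2 * ξ n (l + 2)) * gridAction N K H c hc vinit (n + 1) l ξ
        + (1 / 2 + lam N K / 2 * ξ n (l + 2)) * gridAction N K H c hc vinit (n - 1) l ξ := by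
  have hchild : ∀ n' : ℤ, ∑ s', walkMeasure N K n' l ξ s' * pathCost N K H c vinit n' l ξ s'
      = gridAction N K H c hc vinit n' l ξ - hc * (((l : ℝ) + 1) * dt K) := fun n' => by
    rw [gridAction_eq_sum_pathCost]
    ring
  rw [gridAction_eq_sum_pathCost, Fintype.sum_fin_succ_pi_eq_sum_snoc]
  simp only [walkMeasure_snoc, pathCost_snoc, mul_assoc, ← Finset.mul_sum, mul_add,
    Finset.sum_add_distrib, ← Finset.sum_mul, sum_walkMeasure, hchild, Fintype.sum_bool, if_true,
    Bool.false_eq_true, if_false, ← sub_eq_add_neg]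
  push_cast
  ring

end Action

section DynamicProgramming

variable {N K : ℕ} {H : ℝ → ℝ → ℝ → ℝ} {c hc : ℝ} {vinit : ℝ → ℝ}

theorem lam_nonneg (N K : ℕ) : 0 ≤ lam N K := by
  unfold lam dt dx
  positivity

theorem dt_pos (hK : 0 < K) : 0 < dt K := by
  unfold dt
  positivity

-- `action … n (l + 1) = E_n^{l+1}`; the value `v_Δ^0(x_n)` at `k = 0` makes `action_succ` hold
-- for all `k`.
def action (N K : ℕ) (H : ℝ → ℝ → ℝ → ℝ) (c hc : ℝ) (vinit : ℝ → ℝ) (n : ℤ) :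
    ℕ → (ℤ → ℕ → ℝ) → ℝ
  | 0, _ => vinit ((n : ℝ) * dx N)
  | l + 1, ξ => gridAction N K H c hc vinit n l ξ

theorem action_succ (n : ℤ) (k : ℕ) (ξ : ℤ → ℕ → ℝ) :
    action N K H c hc vinit n (k + 1) ξ =
      LegC H c ((n : ℝ) * dx N) ((k : ℝ) * dt K) (ξ n (k + 1)) * dt K + hc * dt K
        + (1 / 2 - lam N K / 2 * ξ n (k + 1)) * action N K H c hc vinit (n + 1) k ξ
        + (1 / 2 + lam N K / 2 * ξ n (k + 1)) * action N K H c hc vinit (n - 1) k ξ := by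
  cases k with
  | zero => simpa [action] using gridAction_zero n ξ
  | succ l => simpa [action] using gridAction_succ n l ξ

def Dx (N : ℕ) (v : ℤ → ℕ → ℝ) (m : ℤ) (k : ℕ) : ℝ := (v (m + 1) k - v (m - 1) k) / (2 * dx N)

variable {v : ℤ → ℕ → ℝ}

theorem action_succ_eq_value_add (hK : 0 < K) (hsol : SolvesHJ N K H c hc vinit v) {n : ℤ}
    {k : ℕ} (hnk : Even (n + k)) (ξ : ℤ → ℕ → ℝ) :
    action N K H c hc vinit n (k + 1) ξ =
      v n (k + 1) + dt K * fenchelGap (H (n * dx N) (k * dt K)) (ξ n (k + 1)) (c + Dx N v n k)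
        + (1 / 2 - lam N K / 2 * ξ n (k + 1))
          * (action N K H c hc vinit (n + 1) k ξ - v (n + 1) k)
        + (1 / 2 + lam N K / 2 * ξ n (k + 1))
          * (action N K H c hc vinit (n - 1) k ξ - v (n - 1) k) := by
  have hscheme := (div_eq_iff (dt_pos hK).ne').1 (eq_sub_of_add_eq (hsol.2.2 n k hnk))
  have hv : v n (k + 1) = (v (n - 1) k + v (n + 1) k) / 2
      + dt K * (hc - H (n * dx N) (k * dt K) (c + Dx N v n k)) := by
    unfold Dx
    linarith
  rw [action_succ, hv]
  simp only [fenchelGap, LegC, Leg, Dx, lam]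
  ring

theorem parity_of_odd_add_succ {n : ℤ} {k : ℕ} (h : Odd (n + (k + 1 : ℕ))) :
    Even (n + k) ∧ Odd (n + 1 + k) ∧ Odd (n - 1 + k) := by
  have h' := Int.odd_iff.1 h
  push_cast at h'
  exact ⟨Int.even_iff.2 (by omega), Int.odd_iff.2 (by omega), Int.odd_iff.2 (by omega)⟩

theorem transitionProbs_nonneg {ξv : ℝ} (h : |ξv| ≤ (lam N K)⁻¹) :
    0 ≤ 1 / 2 - lam N K / 2 * ξv ∧ 0 ≤ 1 / 2 + lam N K / 2 * ξv := by
  have hlamξ : |lam N K * ξv| ≤ 1 := by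
    rw [abs_mul, abs_of_nonneg (lam_nonneg N K)]
    exact (mul_le_mul_of_nonneg_left h (lam_nonneg N K)).trans mul_inv_le_one
  have := abs_le.1 hlamξ
  constructor <;> linarith

theorem transitionProbs_pos {ξv : ℝ} (h : |ξv| < (lam N K)⁻¹) :
    0 < 1 / 2 - lam N K / 2 * ξv ∧ 0 < 1 / 2 + lam N K / 2 * ξv := by
  have hlamξ : |lam N K * ξv| < 1 := by
    rcases (lam_nonneg N K).eq_or_lt with h0 | hpos
    · simp [← h0]
    · rw [abs_mul, abs_of_pos hpos, ← mul_inv_cancel₀ hpos.ne']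
      exact mul_lt_mul_of_pos_left h hpos
  have := abs_lt.1 hlamξ
  constructor <;> linarith

theorem value_le_action (hK : 0 < K) (hsol : SolvesHJ N K H c hc vinit v)
    (hHc : ∀ x t, Continuous (H x t))
    (hHsl : ∀ x t, Tendsto (fun p => H x t p / |p|) (comap abs atTop) atTop) :
    ∀ (k : ℕ) (n : ℤ), Odd (n + k) → ∀ ξ, Adm N K ξ → v n k ≤ action N K H c hc vinit n k ξ := by
  intro k
  induction k with
  | zero =>
    intro n hn ξ _
    exact (hsol.1 n (by simpa using hn)).le
  | succ k ih =>
    intro n hn ξ hξ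
    obtain ⟨hnk, hup, hdown⟩ := parity_of_odd_add_succ hn
    have hgap := fenchelGap_nonneg (bddAbove_range_mul_sub_of_superlinear
      (hHc (n * dx N) (k * dt K)) (hHsl _ _) (ξ n (k + 1))) (c + Dx N v n k)
    have hw := transitionProbs_nonneg (hξ n (k + 1))
    have := mul_nonneg (dt_pos hK).le hgap
    have := mul_nonneg hw.1 (sub_nonneg.2 (ih _ hup ξ hξ))
    have := mul_nonneg hw.2 (sub_nonneg.2 (ih _ hdown ξ hξ))
    rw [action_succ_eq_value_add hK hsol hnk]
    linarith

-- `ξ*`, clipped to `[-λ⁻¹, λ⁻¹]` so that it is admissible off `G` too; by the CFL condition the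
-- clipping is inactive on `G`.
def optimalVelocity (N K : ℕ) (H : ℝ → ℝ → ℝ → ℝ) (c : ℝ) (v : ℤ → ℕ → ℝ) : ℤ → ℕ → ℝ
  | _, 0 => 0
  | m, k + 1 => max (-(lam N K)⁻¹)
      (min (lam N K)⁻¹ (deriv (H ((m : ℝ) * dx N) ((k : ℝ) * dt K)) (c + Dx N v m k)))

theorem adm_optimalVelocity : Adm N K (optimalVelocity N K H c v) := by
  have h := inv_nonneg.2 (lam_nonneg N K)
  rintro m (_ | k)
  · simpa [optimalVelocity] using h
  · exact abs_le.2 ⟨le_max_left _ _, max_le (by linarith) (min_le_left _ _)⟩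

theorem optimalVelocity_succ {m : ℤ} {k : ℕ}
    (h : |deriv (H ((m : ℝ) * dx N) ((k : ℝ) * dt K)) (c + Dx N v m k)| ≤ (lam N K)⁻¹) :
    optimalVelocity N K H c v m (k + 1)
      = deriv (H ((m : ℝ) * dx N) ((k : ℝ) * dt K)) (c + Dx N v m k) := by
  rw [optimalVelocity, min_eq_right (abs_le.1 h).2, max_eq_right (abs_le.1 h).1]

variable {kstar : ℕ}

theorem action_optimalVelocity (hK : 0 < K) (hsol : SolvesHJ N K H c hc vinit v)
    (hHd : ∀ x t, Differentiable ℝ (H x t)) (hHmono : ∀ x t, Monotone (deriv (H x t)))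
    (hCFL : ∀ (m : ℤ) (k : ℕ), k ≤ kstar → Even (m + (k : ℤ)) →
      |deriv (H ((m : ℝ) * dx N) ((k : ℝ) * dt K)) (c + Dx N v m k)| < (lam N K)⁻¹) :
    ∀ (k : ℕ) (n : ℤ), Odd (n + k) → k ≤ kstar + 1 →
      action N K H c hc vinit n k (optimalVelocity N K H c v) = v n k := by
  intro k
  induction k with
  | zero => exact fun n hn _ => (hsol.1 n (by simpa using hn)).symm
  | succ k ih =>
    intro n hn hk
    obtain ⟨hnk, hup, hdown⟩ := parity_of_odd_add_succ hn
    rw [action_succ_eq_value_add hK hsol hnk, ih _ hup (by omega), ih _ hdown (by omega),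
      optimalVelocity_succ (hCFL n k (by omega) hnk).le, fenchelGap_deriv (hHd _ _) (hHmono _ _)]
    ring

def InCone (n : ℤ) (k : ℕ) (m : ℤ) (j : ℕ) : Prop :=
  1 ≤ j ∧ j ≤ k ∧ Odd (m + (j : ℤ)) ∧ |m - n| ≤ (k : ℤ) - j

theorem inG_iff_inCone {n : ℤ} {l : ℕ} {m : ℤ} {j : ℕ} :
    inG n l m j ↔ InCone n (l + 1) m j := by
  simp only [inG, InCone]
  push_cast
  rfl

theorem InCone.eq_or_inCone {n : ℤ} {k : ℕ} {m : ℤ} {j : ℕ} (h : InCone n (k + 1) m j)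
    (hn : Odd (n + (k + 1 : ℕ))) :
    (m = n ∧ j = k + 1) ∨ InCone (n + 1) k m j ∨ InCone (n - 1) k m j := by
  obtain ⟨h1, hjk, hodd, hmn⟩ := h
  have hn' := Int.odd_iff.1 hn
  have hodd' := Int.odd_iff.1 hodd
  rw [abs_le] at hmn
  push_cast at hn' hmn
  by_cases htop : j = k + 1
  · exact Or.inl ⟨by omega, htop⟩
  by_cases hright : n < m
  · exact Or.inr (Or.inl ⟨h1, by omega, hodd, abs_le.2 ⟨by omega, by omega⟩⟩)
  · exact Or.inr (Or.inr ⟨h1, by omega, hodd, abs_le.2 ⟨by omega, by omega⟩⟩)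

theorem eq_optimalVelocity_of_action_eq (hK : 0 < K) (hsol : SolvesHJ N K H c hc vinit v)
    (hHd : ∀ x t, Differentiable ℝ (H x t))
    (hHsl : ∀ x t, Tendsto (fun p => H x t p / |p|) (comap abs atTop) atTop)
    (hCFL : ∀ (m : ℤ) (k : ℕ), k ≤ kstar → Even (m + (k : ℤ)) →
      |deriv (H ((m : ℝ) * dx N) ((k : ℝ) * dt K)) (c + Dx N v m k)| < (lam N K)⁻¹) :
    ∀ (k : ℕ) (n : ℤ), Odd (n + k) → k ≤ kstar + 1 → ∀ ξ, Adm N K ξ →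
      action N K H c hc vinit n k ξ = v n k →
      ∀ m j, InCone n k m j → ξ m j = optimalVelocity N K H c v m j := by
  intro k
  induction k with
  | zero => exact fun n _ _ ξ _ _ m j h => absurd (h.1.trans h.2.1) (by omega)
  | succ k ih =>
    intro n hn hk ξ hξ heq m j hmj
    obtain ⟨hnk, hup, hdown⟩ := parity_of_odd_add_succ hn
    have hbdd := bddAbove_range_mul_sub_of_superlinear
      (hHd (n * dx N) (k * dt K)).continuous (hHsl _ _) (ξ n (k + 1))
    have hw := transitionProbs_nonneg (hξ n (k + 1))
    have hgap := mul_nonneg (dt_pos hK).le (fenchelGap_nonneg hbdd (c + Dx N v n k))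
    have hup_le := mul_nonneg hw.1 (sub_nonneg.2
      (value_le_action hK hsol (fun x t => (hHd x t).continuous) hHsl k _ hup ξ hξ))
    have hdown_le := mul_nonneg hw.2 (sub_nonneg.2
      (value_le_action hK hsol (fun x t => (hHd x t).continuous) hHsl k _ hdown ξ hξ))
    rw [action_succ_eq_value_add hK hsol hnk, add_assoc, add_assoc, add_eq_left] at heq
    obtain ⟨hgap0, hchildren⟩ := (add_eq_zero_iff_of_nonneg hgap (add_nonneg hup_le hdown_le)).1 heq
    obtain ⟨hup0, hdown0⟩ := (add_eq_zero_iff_of_nonneg hup_le hdown_le).1 hchildren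
    have hderiv := eq_deriv_of_fenchelGap_eq_zero (hHd _ _ _) hbdd
      ((mul_eq_zero.1 hgap0).resolve_left (dt_pos hK).ne')
    have hw' := transitionProbs_pos (N := N) (K := K) (hderiv ▸ hCFL n k (by omega) hnk)
    have hup_eq := sub_eq_zero.1 ((mul_eq_zero.1 hup0).resolve_left hw'.1.ne')
    have hdown_eq := sub_eq_zero.1 ((mul_eq_zero.1 hdown0).resolve_left hw'.2.ne')
    rcases hmj.eq_or_inCone hn with ⟨rfl, rfl⟩ | hmj | hmj
    · rw [hderiv, optimalVelocity_succ (hCFL m k (by omega) hnk).le]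
    · exact ih _ hup (by omega) ξ hξ hup_eq m j hmj
    · exact ih _ hdown (by omega) ξ hξ hdown_eq m j hmj

end DynamicProgramming

theorem scheme_solution_is_stochastic_value_general
    (N K : ℕ) (hK : 0 < K)
    (H : ℝ → ℝ → ℝ → ℝ)
    (hH_C2 : ContDiff ℝ 2 (fun q : ℝ × ℝ × ℝ => H q.1 q.2.1 q.2.2))
    (hH_conv : ∀ x t p, 0 < deriv (deriv (H x t)) p)
    (hH_sl : ∀ x t, Filter.Tendsto (fun p => H x t p / |p|)
      (Filter.comap abs Filter.atTop) Filter.atTop)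
    (c : ℝ) (hFun : ℝ → ℝ)
    (u0 v0 : ℝ → ℝ)
    (v : ℤ → ℕ → ℝ) (kstar : ℕ)
    (hsol : SolvesHJ N K H c (hFun c) (vD0 N u0 v0) v)
    (hCFL : ∀ (m : ℤ) (k : ℕ), k ≤ kstar → Even (m + (k : ℤ)) →
      |deriv (H ((m : ℝ) * dx N) ((k : ℝ) * dt K))
          (c + (v (m + 1) k - v (m - 1) k) / (2 * dx N))| < (lam N K)⁻¹)
    (n : ℤ) (l : ℕ) (hodd : Odd (n + (l : ℤ) + 1)) (hl : l + 1 ≤ kstar + 1) :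
    v n (l + 1)
        = sInf {y | ∃ ξ, Adm N K ξ ∧ y = gridAction N K H c (hFun c) (vD0 N u0 v0) n l ξ} ∧
      ∃ ξs : ℤ → ℕ → ℝ, Adm N K ξs ∧
        gridAction N K H c (hFun c) (vD0 N u0 v0) n l ξs = v n (l + 1) ∧
        (∀ (m : ℤ) (k : ℕ), inG n l m (k + 1) →
          ξs m (k + 1) = deriv (H ((m : ℝ) * dx N) ((k : ℝ) * dt K))
            (c + (v (m + 1) k - v (m - 1) k) / (2 * dx N))) ∧
        (∀ ξ' : ℤ → ℕ → ℝ, Adm N K ξ' →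
          gridAction N K H c (hFun c) (vD0 N u0 v0) n l ξ' = v n (l + 1) →
          ∀ (m : ℤ) (k : ℕ), inG n l m k → ξ' m k = ξs m k) := by
  have hHd : ∀ x t, Differentiable ℝ (H x t) := fun x t =>
    (hH_C2.comp (contDiff_const.prodMk (contDiff_const.prodMk contDiff_id))).differentiable
      (by norm_num)
  have hHmono : ∀ x t, Monotone (deriv (H x t)) := fun x t =>
    (strictMono_of_deriv_pos (hH_conv x t)).monotone
  have hn : Odd (n + (l + 1 : ℕ)) := by rwa [Nat.cast_succ, ← add_assoc]
  have hopt := action_optimalVelocity hK hsol hHd hHmono hCFL (l + 1) n hn hl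
  have hle := value_le_action hK hsol (fun x t => (hHd x t).continuous) hH_sl (l + 1) n hn
  have hleast : IsLeast {y | ∃ ξ, Adm N K ξ ∧ y = gridAction N K H c (hFun c) (vD0 N u0 v0) n l ξ}
      (v n (l + 1)) :=
    ⟨⟨_, adm_optimalVelocity, hopt.symm⟩, by rintro _ ⟨ξ, hξ, rfl⟩; exact hle ξ hξ⟩
  refine ⟨hleast.csInf_eq.symm, optimalVelocity N K H c v, adm_optimalVelocity, hopt,
    fun m k hmk => ?_, fun ξ hξ heq m k hmk => ?_⟩
  · obtain ⟨-, hkl, hmk, -⟩ := hmk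
    exact optimalVelocity_succ (hCFL m k (by omega) (parity_of_odd_add_succ hmk).1).le
  · exact eq_optimalVelocity_of_action_eq hK hsol hHd hH_sl hCFL (l + 1) n hn hl ξ hξ heq m k
      (inG_iff_inCone.1 hmk)

/-- Proposition 2.2: if `v` solves the Hamilton–Jacobi scheme (2.3) and
`u_m^k = D_x v_{m+1}^k` satisfies the CFL condition up to time step `k*`, then `v_n^{l+1}`
is the infimum of the discrete stochastic action `E_n^{l+1}(ξ)` over velocity fields
`ξ : G → [-λ⁻¹, λ⁻¹]`, and the minimizing velocity field exists, is unique (on `G`) and is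
given by `ξ*_m^{k+1} = H_p(x_m, t_k, c + D_x v_{m+1}^k)`. -/
theorem scheme_solution_is_stochastic_value
    (N K : ℕ) (hN : 0 < N) (hK : 0 < K)
    (H : ℝ → ℝ → ℝ → ℝ)
    (hH_C2 : ContDiff ℝ 2 (fun q : ℝ × ℝ × ℝ => H q.1 q.2.1 q.2.2))
    (hH_perx : ∀ x t p, H (x + 1) t p = H x t p)
    (hH_pert : ∀ x t p, H x (t + 1) p = H x t p)
    (hH_conv : ∀ x t p, 0 < deriv (deriv (H x t)) p)
    (hH_sl : ∀ x t, Filter.Tendsto (fun p => H x t p / |p|)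
      (Filter.comap abs Filter.atTop) Filter.atTop)
    (c0 c1 c : ℝ) (hc : c ∈ Set.Icc c0 c1) (hFun : ℝ → ℝ)
    (r : ℝ) (hr : 0 < r) (u0 v0 : ℝ → ℝ)
    (hu0_int : ∀ a b : ℝ, IntervalIntegrable u0 MeasureTheory.volume a b)
    (hu0_per : ∀ y, u0 (y + 1) = u0 y)
    (hu0_mean : (∫ y in (0:ℝ)..1, u0 y) = 0)
    (hu0_bd : ∀ y, |u0 y| ≤ r)
    (hv0_bd : ∀ y, |v0 y| ≤ r)
    (hv0_deriv : ∀ x, v0 x = v0 0 + ∫ y in (0:ℝ)..x, u0 y)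
    (v : ℤ → ℕ → ℝ) (kstar : ℕ)
    (hsol : SolvesHJ N K H c (hFun c) (vD0 N u0 v0) v)
    (hCFL : ∀ (m : ℤ) (k : ℕ), k ≤ kstar → Even (m + (k : ℤ)) →
      |deriv (H ((m : ℝ) * dx N) ((k : ℝ) * dt K))
          (c + (v (m + 1) k - v (m - 1) k) / (2 * dx N))| < (lam N K)⁻¹)
    (n : ℤ) (l : ℕ) (hodd : Odd (n + (l : ℤ) + 1)) (hl : l + 1 ≤ kstar + 1) :
    v n (l + 1)
        = sInf {y | ∃ ξ, Adm N K ξ ∧ y = gridAction N K H c (hFun c) (vD0 N u0 v0) n l ξ} ∧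
      ∃ ξs : ℤ → ℕ → ℝ, Adm N K ξs ∧
        gridAction N K H c (hFun c) (vD0 N u0 v0) n l ξs = v n (l + 1) ∧
        (∀ (m : ℤ) (k : ℕ), inG n l m (k + 1) →
          ξs m (k + 1) = deriv (H ((m : ℝ) * dx N) ((k : ℝ) * dt K))
            (c + (v (m + 1) k - v (m - 1) k) / (2 * dx N))) ∧
        (∀ ξ' : ℤ → ℕ → ℝ, Adm N K ξ' →
          gridAction N K H c (hFun c) (vD0 N u0 v0) n l ξ' = v n (l + 1) →
          ∀ (m : ℤ) (k : ℕ), inG n l m k → ξ' m k = ξs m k) :=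
  scheme_solution_is_stochastic_value_general N K hK H hH_C2 hH_conv hH_sl c hFun u0 v0 v kstar hsol
    hCFL n l hodd hl
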